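/- arXiv:1803.03121 — 4 statements merged into one kernel-verified Lean document; each statement's English description precedes it below -/
import Mathlib

section
/- Let α, β be complex numbers with Re(α) > 0 and Re(β) > 1, let p > 0 be real, and let x, y be complex with Re(x) > 0, Re(y) > 0. Then ᴪB_p^{(α,β)}(x,y) = 2 ∫₀^{π/2} cos^{2x−1}(θ) sin^{2y−1}(θ) ₁Ψ₁(α,β; −p sec²(θ) csc²(θ)) dθ. -/
open MeasureTheory Real Set

/-- The Wright function `₁Ψ₁(α,β;z) = ∑ zⁿ/(n! Γ(αn+β))`. -/
noncomputable def wright (α β z : ℂ) : ℂ :=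
  ∑' n : ℕ, z ^ n / ((n.factorial : ℂ) * Complex.Gamma (α * n + β))

/-- The Ψ-beta function `ᴪB_p^{(α,β)}(x,y)`. -/
noncomputable def psiBeta (α β : ℂ) (p : ℝ) (x y : ℂ) : ℂ :=
  ∫ t in (0:ℝ)..1, (t : ℂ) ^ (x - 1) * ((1 : ℂ) - t) ^ (y - 1) *
    wright α β (-(p : ℂ) / (t * (1 - t)))

/-- The function `ᴪΓ^{(α,β)}(s) = ∫₀^∞ v^{s-1} ₁Ψ₁(α,β;-v) dv`. -/
noncomputable def psiGamma (α β s : ℂ) : ℂ :=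
  ∫ v in Ioi (0:ℝ), (v : ℂ) ^ (s - 1) * wright α β (-(v : ℂ))

/-- The Ψ-gamma function `ᴪΓ_p^{(α,β)}(x)`. -/
noncomputable def psiGammaP (α β : ℂ) (p : ℝ) (x : ℂ) : ℂ :=
  ∫ t in Ioi (0:ℝ), (t : ℂ) ^ (x - 1) * wright α β (-(t : ℂ) - p / t)

/-- The classical Euler beta function `B(x,y) = Γ(x)Γ(y)/Γ(x+y)`. -/
noncomputable def eulerBeta (x y : ℂ) : ℂ :=
  Complex.Gamma x * Complex.Gamma y / Complex.Gamma (x + y)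

/-- The Pochhammer symbol `(a)_n = a(a+1)⋯(a+n-1)`. -/
noncomputable def poch (a : ℂ) (n : ℕ) : ℂ := (ascPochhammer ℂ n).eval a

/-- The Ψ-Gauss hypergeometric function `ᴪF_p^{(α,β)}(a,b;c;z)`. -/
noncomputable def psiF (α β : ℂ) (p : ℝ) (a b c z : ℂ) : ℂ :=
  ∑' n : ℕ, poch a n * (psiBeta α β p (b + n) (c - b) / eulerBeta b (c - b)) *
    z ^ n / (n.factorial : ℂ)

/-- The Ψ-confluent hypergeometric function `ᴪΦ_p^{(α,β)}(b;c;z)`. -/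
noncomputable def psiPhi (α β : ℂ) (p : ℝ) (b c z : ℂ) : ℂ :=
  ∑' n : ℕ, (psiBeta α β p (b + n) (c - b) / eulerBeta b (c - b)) *
    z ^ n / (n.factorial : ℂ)

/-- The classical Gauss hypergeometric series `₂F₁(a,b;c;z)`. -/
noncomputable def hyp2F1 (a b c z : ℂ) : ℂ :=
  ∑' n : ℕ, poch a n * poch b n / poch c n * z ^ n / (n.factorial : ℂ)

/-- The classical confluent hypergeometric (Kummer) function `Φ(b;c;z)`. -/
noncomputable def kummerPhi (b c z : ℂ) : ℂ :=
  ∑' n : ℕ, poch b n / poch c n * z ^ n / (n.factorial : ℂ)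

/-! Substitute `t = cos² θ`, which maps `(0, π/2)` decreasingly onto `(0, 1)` with
`|dt| = 2 sin θ cos θ dθ` and `1 - t = sin² θ`. Since `cos θ, sin θ > 0` there,
`(cos² θ)^(x-1) · cos θ = cos θ^(2x-1)` and likewise for `sin`, and the argument
`-p / (t (1 - t))` of the Wright function becomes `-p sec² θ csc² θ`. -/

theorem strictAntiOn_cos_sq : StrictAntiOn (fun θ => cos θ ^ 2) (Icc 0 (π / 2)) :=
  fun a ha b hb hab => by
    have hπ : π / 2 ≤ π := by linarith [pi_pos]
    have hcos : cos b < cos a :=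
      strictAntiOn_cos ⟨ha.1, ha.2.trans hπ⟩ ⟨hb.1, hb.2.trans hπ⟩ hab
    exact pow_lt_pow_left₀ hcos (cos_nonneg_of_mem_Icc ⟨by linarith [pi_pos, hb.1], hb.2⟩)
      two_ne_zero

theorem image_cos_sq_Ioo : (fun θ => cos θ ^ 2) '' Ioo 0 (π / 2) = Ioo 0 1 := by
  refine Subset.antisymm ?_ ?_
  · rintro _ ⟨θ, hθ, rfl⟩
    have hmem := Ioo_subset_Icc_self hθ
    constructor
    · simpa using strictAntiOn_cos_sq hmem ⟨pi_div_two_pos.le, le_rfl⟩ hθ.2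
    · simpa using strictAntiOn_cos_sq ⟨le_rfl, pi_div_two_pos.le⟩ hmem hθ.1
  · simpa using intermediate_value_Ioo' pi_div_two_pos.le (continuous_cos.pow 2).continuousOn

theorem integral_Ioo_zero_one_eq_integral_cos_sq {E : Type*} [NormedAddCommGroup E]
    [NormedSpace ℝ E] (f : ℝ → E) :
    ∫ t in Ioo 0 1, f t = ∫ θ in Ioo 0 (π / 2), (2 * sin θ * cos θ) • f (cos θ ^ 2) := by
  have hderiv : ∀ θ ∈ Ioo 0 (π / 2), HasDerivWithinAt (fun θ => cos θ ^ 2)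
      (2 * cos θ * -sin θ) (Ioo 0 (π / 2)) θ := fun θ _ => by
    simpa using ((hasDerivAt_cos θ).fun_pow 2).hasDerivWithinAt
  rw [← image_cos_sq_Ioo, integral_image_eq_integral_abs_deriv_smul measurableSet_Ioo hderiv
    (strictAntiOn_cos_sq.injOn.mono Ioo_subset_Icc_self)]
  refine setIntegral_congr_fun measurableSet_Ioo fun θ ⟨h0, h1⟩ => ?_
  have hc : 0 < cos θ := cos_pos_of_mem_Ioo ⟨by linarith [pi_pos], h1⟩
  have hs : 0 < sin θ := sin_pos_of_pos_of_lt_pi h0 (by linarith [pi_pos])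
  rw [abs_of_neg (by nlinarith)]
  ring_nf

theorem ofReal_sq_cpow_sub_one_mul_self {r : ℝ} (hr : 0 < r) (w : ℂ) :
    ((r : ℂ) ^ 2) ^ (w - 1) * r = (r : ℂ) ^ (2 * w - 1) := by
  have harg : (r : ℂ).arg = 0 := Complex.arg_ofReal_of_nonneg hr.le
  rw [← Complex.cpow_ofNat_mul' (by simp [harg, pi_pos]) (by simp [harg, pi_pos.le]),
    show 2 * w - 1 = 2 * (w - 1) + 1 by ring,
    Complex.cpow_add _ _ (Complex.ofReal_ne_zero.2 hr.ne'), Complex.cpow_one]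

theorem integral_beta_kernel_eq_integral_cos_sin (F : ℂ → ℂ) (x y : ℂ) :
    ∫ t in (0:ℝ)..1, (t : ℂ) ^ (x - 1) * (1 - (t : ℂ)) ^ (y - 1) * F (t * (1 - t)) =
      2 * ∫ θ in (0:ℝ)..(π / 2), (cos θ : ℂ) ^ (2 * x - 1) * (sin θ : ℂ) ^ (2 * y - 1) *
        F ((cos θ : ℂ) ^ 2 * (sin θ : ℂ) ^ 2) := by
  rw [intervalIntegral.integral_of_le zero_le_one, integral_Ioc_eq_integral_Ioo,
    integral_Ioo_zero_one_eq_integral_cos_sq, intervalIntegral.integral_of_le pi_div_two_pos.le,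
    integral_Ioc_eq_integral_Ioo, ← integral_const_mul]
  refine setIntegral_congr_fun measurableSet_Ioo fun θ ⟨h0, h1⟩ => ?_
  have hc : 0 < cos θ := cos_pos_of_mem_Ioo ⟨by linarith [pi_pos], h1⟩
  have hs : 0 < sin θ := sin_pos_of_pos_of_lt_pi h0 (by linarith [pi_pos])
  have hsin : (1 : ℂ) - (cos θ : ℂ) ^ 2 = (sin θ : ℂ) ^ 2 := by
    exact_mod_cast (sin_sq θ).symm
  simp only [Complex.real_smul, Complex.ofReal_mul, Complex.ofReal_pow, Complex.ofReal_ofNat,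
    hsin]
  rw [← ofReal_sq_cpow_sub_one_mul_self hc, ← ofReal_sq_cpow_sub_one_mul_self hs]
  ring

theorem psiBeta_trig_rep_general (α β : ℂ) (p : ℝ) (x y : ℂ) :
    psiBeta α β p x y =
      2 * ∫ θ in (0:ℝ)..(π/2),
        (Real.cos θ : ℂ) ^ (2 * x - 1) * (Real.sin θ : ℂ) ^ (2 * y - 1) *
          wright α β (-(p : ℂ) * ((Real.cos θ : ℂ)⁻¹) ^ 2 * ((Real.sin θ : ℂ)⁻¹) ^ 2) := by
  have hargument : ∀ c s : ℂ, -(p : ℂ) * c⁻¹ ^ 2 * s⁻¹ ^ 2 = -(p : ℂ) / (c ^ 2 * s ^ 2) :=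
    fun c s => by ring
  simp only [hargument]
  exact integral_beta_kernel_eq_integral_cos_sin (fun u => wright α β (-(p : ℂ) / u)) x y

theorem psiBeta_trig_rep (α β : ℂ) (p : ℝ) (x y : ℂ)
    (hα : 0 < α.re) (hβ : 1 < β.re) (hp : 0 < p)
    (hx : 0 < x.re) (hy : 0 < y.re) :
    psiBeta α β p x y =
      2 * ∫ θ in (0:ℝ)..(π/2),
        (Real.cos θ : ℂ) ^ (2 * x - 1) * (Real.sin θ : ℂ) ^ (2 * y - 1) *
          wright α β (-(p : ℂ) * ((Real.cos θ : ℂ)⁻¹) ^ 2 * ((Real.sin θ : ℂ)⁻¹) ^ 2) :=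
  psiBeta_trig_rep_general α β p x y
end

section
/- Let α, β be complex numbers with Re(α) > 0 and Re(β) > 1, let p > 0 be real, and let x, y be complex with Re(x) > 0, Re(y) > 0. Then ᴪB_p^{(α,β)}(x,y) = ∫₀^∞ u^{x−1}/(1+u)^{x+y} · ₁Ψ₁(α,β; −2p − p(u + 1/u)) du. -/
open MeasureTheory Real Set

/-! Substitute `t = u / (1 + u)`, an increasing bijection `(0, ∞) → (0, 1)` with
`dt = du / (1 + u)²`, `1 - t = 1 / (1 + u)` and `t (1 - t) = u / (1 + u)²`; the kernel becomes
`u^(x-1) / (1 + u)^(x+y)` and `-p / (t (1 - t)) = -2p - p (u + 1/u)`. -/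

lemma image_div_one_add_Ioi : (fun u : ℝ => u / (1 + u)) '' Ioi 0 = Ioo 0 1 := by
  ext t
  constructor
  · rintro ⟨u, hu : 0 < u, rfl⟩
    have h1 : 0 < 1 + u := by linarith
    exact ⟨div_pos hu h1, (div_lt_one h1).2 (by linarith)⟩
  · rintro ⟨ht0, ht1⟩
    refine ⟨t / (1 - t), div_pos ht0 (by linarith), ?_⟩
    have h1 : 1 - t ≠ 0 := by linarith
    field_simp
    ring

lemma monotoneOn_div_one_add : MonotoneOn (fun u : ℝ => u / (1 + u)) (Ioi (-1)) := by
  intro a (ha : -1 < a) b (hb : -1 < b) hab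
  rw [div_le_div_iff₀ (by linarith) (by linarith)]
  nlinarith

lemma hasDerivAt_div_one_add {u : ℝ} (hu : 1 + u ≠ 0) :
    HasDerivAt (fun u : ℝ => u / (1 + u)) ((1 + u) ^ 2)⁻¹ u := by
  have h := (hasDerivAt_id' u).fun_div ((hasDerivAt_id' u).const_add 1) hu
  rwa [mul_one, one_mul, add_sub_cancel_right, one_div] at h

theorem integral_Ioo_zero_one_eq_integral_Ioi {E : Type*} [NormedAddCommGroup E]
    [NormedSpace ℝ E] (g : ℝ → E) :
    ∫ t in Ioo (0 : ℝ) 1, g t = ∫ u in Ioi (0 : ℝ), ((1 + u) ^ 2)⁻¹ • g (u / (1 + u)) := by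
  rw [← image_div_one_add_Ioi]
  exact integral_image_eq_integral_deriv_smul_of_monotoneOn measurableSet_Ioi
    (fun u (hu : 0 < u) => (hasDerivAt_div_one_add (by linarith)).hasDerivWithinAt)
    (monotoneOn_div_one_add.mono fun u (hu : 0 < u) => show -1 < u by linarith) g

lemma beta_kernel_div_one_add_mul_deriv {u : ℝ} (hu : 0 < u) (x y : ℂ) :
    ((u / (1 + u) : ℝ) : ℂ) ^ (x - 1) * (1 - ((u / (1 + u) : ℝ) : ℂ)) ^ (y - 1) *
        (((1 + u) ^ 2)⁻¹ : ℝ) = (u : ℂ) ^ (x - 1) / (1 + u) ^ (x + y) := by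
  have hv : 0 < 1 + u := by linarith
  have hvC : ((1 + u : ℝ) : ℂ) ≠ 0 := Complex.ofReal_ne_zero.2 hv.ne'
  have h1 : 1 - ((u / (1 + u) : ℝ) : ℂ) = (1 : ℝ) / (1 + u : ℝ) := by
    push_cast at hvC ⊢
    field_simp
    ring
  rw [h1, Complex.ofReal_div, Complex.div_cpow_ofReal_nonneg hu.le hv.le,
    Complex.div_cpow_ofReal_nonneg zero_le_one hv.le, Complex.ofReal_one, Complex.one_cpow]
  have hpow : ((1 + u : ℝ) : ℂ) ^ (x - 1) * ((1 + u : ℝ) : ℂ) ^ (y - 1) *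
      ((1 + u : ℝ) : ℂ) ^ (2 : ℕ) = ((1 + u : ℝ) : ℂ) ^ (x + y) := by
    rw [← Complex.cpow_natCast, ← Complex.cpow_add _ _ hvC, ← Complex.cpow_add _ _ hvC]
    push_cast
    ring_nf
  push_cast at hpow hvC ⊢
  rw [← hpow]
  field_simp

lemma mul_one_sub_div_one_add (u : ℂ) (hu : 1 + u ≠ 0) :
    u / (1 + u) * (1 - u / (1 + u)) = u / (1 + u) ^ 2 := by
  field_simp
  ring

theorem integral_beta_kernel_eq_integral_Ioi (f : ℂ → ℂ) (x y : ℂ) :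
    ∫ t in (0 : ℝ)..1, (t : ℂ) ^ (x - 1) * (1 - (t : ℂ)) ^ (y - 1) * f (t * (1 - t)) =
      ∫ u in Ioi (0 : ℝ), (u : ℂ) ^ (x - 1) / (1 + u) ^ (x + y) * f (u / (1 + u) ^ 2) := by
  rw [intervalIntegral.integral_of_le zero_le_one, integral_Ioc_eq_integral_Ioo,
    integral_Ioo_zero_one_eq_integral_Ioi]
  refine setIntegral_congr_fun measurableSet_Ioi fun u (hu : 0 < u) => ?_
  have hv : (1 : ℂ) + u ≠ 0 := by exact_mod_cast (by linarith : (1 : ℝ) + u ≠ 0)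
  rw [Complex.real_smul, ← beta_kernel_div_one_add_mul_deriv hu]
  push_cast
  rw [mul_one_sub_div_one_add _ hv]
  ring

lemma neg_div_div_one_add_sq (p : ℂ) {u : ℂ} (hu : u ≠ 0) :
    -p / (u / (1 + u) ^ 2) = -2 * p - p * (u + u⁻¹) := by
  rw [div_div_eq_mul_div]
  field_simp
  ring

theorem psiBeta_Ioi_rep_general (α β : ℂ) (p : ℝ) (x y : ℂ) :
    psiBeta α β p x y =
      ∫ u in Ioi (0:ℝ), (u : ℂ) ^ (x - 1) / ((1 : ℂ) + u) ^ (x + y) *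
        wright α β (-2 * (p : ℂ) - (p : ℂ) * ((u : ℂ) + (u : ℂ)⁻¹)) := by
  rw [psiBeta, integral_beta_kernel_eq_integral_Ioi (fun z => wright α β (-(p : ℂ) / z))]
  refine setIntegral_congr_fun measurableSet_Ioi fun u (hu : 0 < u) => ?_
  rw [neg_div_div_one_add_sq _ (Complex.ofReal_ne_zero.2 hu.ne')]

theorem psiBeta_Ioi_rep (α β : ℂ) (p : ℝ) (x y : ℂ)
    (hα : 0 < α.re) (hβ : 1 < β.re) (hp : 0 < p)
    (hx : 0 < x.re) (hy : 0 < y.re) :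
    psiBeta α β p x y =
      ∫ u in Ioi (0:ℝ), (u : ℂ) ^ (x - 1) / ((1 : ℂ) + u) ^ (x + y) *
        wright α β (-2 * (p : ℂ) - (p : ℂ) * ((u : ℂ) + (u : ℂ)⁻¹)) :=
  psiBeta_Ioi_rep_general α β p x y
end

section
/- Let α, β be complex numbers with Re(α) > 0 and Re(β) > 1, let p > 0 be real, let a, b, c be complex with Re(c) > Re(b) > 0, and let n be a natural number. Then for |z| < 1 the n-th derivative of the Ψ-Gauss hypergeometric function in z satisfies d^n/dz^n [ᴪF_p^{(α,β)}(a,b;c;z)] = ((a)_n (b)_n / (c)_n) · ᴪF_p^{(α,β)}(a+n, b+n; c+n; z), where (λ)_n is the Pochhammer symbol. -/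
open MeasureTheory Real Set

/-!
The coefficients of `ᴪF_p^{(α,β)}(a,b;c;·)` grow at most polynomially: `(a)_m / m!` is
bounded by `(m+1)^⌈|a|⌉`, and `ᴪB_p^{(α,β)}(b+m, c-b)` is bounded in `m` because raising `m`
only multiplies the integrand by a power of `t ∈ (0,1]`. Hence the series may be differentiated
termwise in the unit disc, and the index shift `(a)_{m+1} = a (a+1)_m` together with
`B(b+1, c-b) = (b/c) B(b, c-b)` gives `d/dz ᴪF(a,b;c;z) = (ab/c) ᴪF(a+1,b+1;c+1;z)`.
Induction on `n` finishes the proof.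
-/

open Metric
open scoped Nat

lemma poch_succ_left (x : ℂ) (n : ℕ) : poch x (n + 1) = x * poch (x + 1) n := by
  simp [poch, ascPochhammer_succ_left, Polynomial.eval_mul, Polynomial.eval_comp]

lemma succ_ascFactorial_le_factorial_mul_succ_pow (N m : ℕ) :
    (N + 1).ascFactorial m ≤ m ! * (m + 1) ^ N := by
  refine Nat.le_of_mul_le_mul_left ?_ (Nat.factorial_pos N)
  calc N ! * (N + 1).ascFactorial m = m ! * (m + 1).ascFactorial N := by
        rw [Nat.factorial_mul_ascFactorial, Nat.factorial_mul_ascFactorial, add_comm]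
    _ ≤ m ! * (N ! * (m + 1) ^ N) :=
        Nat.mul_le_mul_left _ (Nat.ascFactorial_le_factorial_mul_pow _ _)
    _ = N ! * (m ! * (m + 1) ^ N) := by ring

lemma norm_poch_le_ascFactorial (a : ℂ) (m : ℕ) :
    ‖poch a m‖ ≤ (⌈‖a‖⌉₊ + 1).ascFactorial m := by
  induction m with
  | zero => simp [poch]
  | succ m ih =>
    have hlin : ‖a + m‖ ≤ (⌈‖a‖⌉₊ + 1 + m : ℕ) := by
      calc ‖a + m‖ ≤ ‖a‖ + m := by simpa using norm_add_le a m
        _ ≤ _ := by push_cast; linarith [Nat.le_ceil ‖a‖]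
    rw [poch, ascPochhammer_succ_eval, norm_mul, Nat.ascFactorial_succ, Nat.cast_mul, mul_comm]
    exact mul_le_mul hlin ih (norm_nonneg _) (Nat.cast_nonneg _)

lemma norm_poch_le_factorial_mul_succ_pow (a : ℂ) (m : ℕ) :
    ‖poch a m‖ ≤ m ! * ((m : ℝ) + 1) ^ ⌈‖a‖⌉₊ :=
  (norm_poch_le_ascFactorial a m).trans
    (by exact_mod_cast succ_ascFactorial_le_factorial_mul_succ_pow _ m)

lemma exists_forall_norm_intervalIntegral_le_of_antitone {E : Type*} [NormedAddCommGroup E]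
    [NormedSpace ℝ E] {f : ℕ → ℝ → E} {a b : ℝ} (hab : a ≤ b)
    (hf : ∀ k m, k ≤ m → ∀ t ∈ Ioc a b, ‖f m t‖ ≤ ‖f k t‖) :
    ∃ C, ∀ m, ‖∫ t in a..b, f m t‖ ≤ C := by
  classical
  -- Non-integrable members have integral `0`; the others come after the first integrable one.
  by_cases hex : ∃ m, IntervalIntegrable (f m) volume a b
  · refine ⟨∫ t in a..b, ‖f (Nat.find hex) t‖, fun m => ?_⟩
    by_cases hm : IntervalIntegrable (f m) volume a b
    · exact intervalIntegral.norm_integral_le_of_norm_le hab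
        (ae_of_all _ (hf _ m (Nat.find_min' hex hm))) (Nat.find_spec hex).norm
    · rw [intervalIntegral.integral_undef hm, norm_zero]
      exact intervalIntegral.integral_nonneg hab fun t _ => norm_nonneg _
  · exact ⟨0, fun m => by rw [intervalIntegral.integral_undef fun h => hex ⟨m, h⟩, norm_zero]⟩

lemma exists_forall_norm_psiBeta_add_nat_le (α β : ℂ) (p : ℝ) (x y : ℂ) :
    ∃ C, ∀ m : ℕ, ‖psiBeta α β p (x + m) y‖ ≤ C := by
  refine exists_forall_norm_intervalIntegral_le_of_antitone
    (f := fun m t => (t : ℂ) ^ (x + m - 1) * ((1 : ℂ) - t) ^ (y - 1) *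
      wright α β (-(p : ℂ) / (t * (1 - t)))) zero_le_one fun k m hkm t ht => ?_
  have ht0 : (t : ℂ) ≠ 0 := by exact_mod_cast ht.1.ne'
  have hsplit : (t : ℂ) ^ (x + m - 1) = (t : ℂ) ^ (m - k) * (t : ℂ) ^ (x + k - 1) := by
    rw [← Complex.cpow_natCast, ← Complex.cpow_add _ _ ht0]
    push_cast [Nat.cast_sub hkm]
    ring_nf
  have hpow : ‖(t : ℂ) ^ (m - k)‖ ≤ 1 := by
    rw [norm_pow, Complex.norm_real, Real.norm_of_nonneg ht.1.le]
    exact pow_le_one₀ ht.1.le ht.2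
  simp only [hsplit, mul_assoc, norm_mul (_ ^ (m - k))]
  exact mul_le_of_le_one_left (norm_nonneg _) hpow

section TermwiseDeriv

variable {𝕜 : Type*} [RCLike 𝕜]

lemma hasDerivAt_tsum_mul_pow {v : ℕ → 𝕜} {C : ℝ} {N : ℕ}
    (hv : ∀ m, ‖v m‖ ≤ C * ((m : ℝ) + 1) ^ N) {z : 𝕜} (hz : ‖z‖ < 1) :
    HasDerivAt (fun w => ∑' m, v m * w ^ m) (∑' m, v (m + 1) * (m + 1) * z ^ m) z := by
  obtain ⟨r, hzr, hr1⟩ := exists_between hz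
  have hr0 : 0 < r := (norm_nonneg z).trans_lt hzr
  set u : ℕ → ℝ := fun m => C / r ^ 2 * (((m + 1 : ℕ) : ℝ) ^ (N + 1) * r ^ (m + 1))
  have hu : Summable u :=
    ((summable_nat_add_iff (f := fun m : ℕ => (m : ℝ) ^ (N + 1) * r ^ m) 1).2 <|
      summable_pow_mul_geometric_of_norm_lt_one (N + 1)
        (by rwa [Real.norm_of_nonneg hr0.le])).mul_left _
  have hbound : ∀ m, ∀ w ∈ ball (0 : 𝕜) r, ‖v m * (m * w ^ (m - 1))‖ ≤ u m := by
    intro m w hw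
    have hwr : ‖w‖ ≤ r := (mem_ball_zero_iff.1 hw).le
    have hpow : (m : ℝ) * ‖w‖ ^ (m - 1) ≤ ((m : ℝ) + 1) * r ^ (m + 1) / r ^ 2 := by
      rcases m with _ | m
      · simp only [CharP.cast_eq_zero, zero_mul]; positivity
      · rw [Nat.add_sub_cancel, show r ^ (m + 1 + 1) = r ^ m * r ^ 2 by ring, ← mul_assoc,
          mul_div_cancel_right₀ _ (by positivity)]
        gcongr
        · push_cast; linarith
    calc ‖v m * (m * w ^ (m - 1))‖ = ‖v m‖ * ((m : ℝ) * ‖w‖ ^ (m - 1)) := by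
          rw [norm_mul, norm_mul, norm_pow, RCLike.norm_natCast]
      _ ≤ C * ((m : ℝ) + 1) ^ N * (((m : ℝ) + 1) * r ^ (m + 1) / r ^ 2) := by
          have hC : 0 ≤ C := by simpa using (norm_nonneg _).trans (hv 0)
          gcongr
          exact hv m
      _ = u m := by simp only [u]; push_cast; ring
  have hsum0 : Summable fun m => v m * (0 : 𝕜) ^ m :=
    summable_of_ne_finset_zero (s := {0}) fun m hm => by simp [zero_pow (by simpa using hm)]
  have hderiv := hasDerivAt_tsum_of_isPreconnected hu isOpen_ball
    (convex_ball (0 : 𝕜) r).isPreconnected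
    (fun m w _ => (hasDerivAt_pow m w).const_mul (v m)) hbound
    (mem_ball_self hr0) hsum0 (mem_ball_zero_iff.2 hzr)
  have hshift : ∑' m, v m * (m * z ^ (m - 1)) = ∑' m, v (m + 1) * (m + 1) * z ^ m := by
    have hsum := Summable.of_norm_bounded hu fun m => hbound m z (mem_ball_zero_iff.2 hzr)
    rw [hsum.tsum_eq_zero_add]
    simp only [Nat.cast_zero, zero_mul, mul_zero, zero_add, Nat.add_sub_cancel, Nat.cast_add,
      Nat.cast_one, mul_assoc]
  rwa [hshift] at hderiv

end TermwiseDeriv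

lemma eulerBeta_add_one_left {b c : ℂ} (hb : b ≠ 0) (hc : c ≠ 0) :
    eulerBeta (b + 1) (c - b) = b / c * eulerBeta b (c - b) := by
  rw [eulerBeta, eulerBeta, Complex.Gamma_add_one b hb, show b + 1 + (c - b) = c + 1 by ring,
    Complex.Gamma_add_one c hc, add_sub_cancel]
  field_simp

section PsiF

variable (α β : ℂ) (p : ℝ)

noncomputable def psiFCoeff (a b c : ℂ) (m : ℕ) : ℂ :=
  poch a m / m ! * (psiBeta α β p (b + m) (c - b) / eulerBeta b (c - b))

lemma psiF_eq_tsum_psiFCoeff (a b c z : ℂ) :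
    psiF α β p a b c z = ∑' m, psiFCoeff α β p a b c m * z ^ m :=
  tsum_congr fun m => by rw [psiFCoeff]; ring

lemma exists_forall_norm_psiFCoeff_le (a b c : ℂ) :
    ∃ C, ∀ m : ℕ, ‖psiFCoeff α β p a b c m‖ ≤ C * ((m : ℝ) + 1) ^ ⌈‖a‖⌉₊ := by
  obtain ⟨C, hC⟩ := exists_forall_norm_psiBeta_add_nat_le α β p b (c - b)
  refine ⟨C / ‖eulerBeta b (c - b)‖, fun m => ?_⟩
  have hpoch : ‖poch a m‖ / m ! ≤ ((m : ℝ) + 1) ^ ⌈‖a‖⌉₊ :=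
    div_le_of_le_mul₀ (by positivity) (by positivity)
      ((norm_poch_le_factorial_mul_succ_pow a m).trans_eq (mul_comm _ _))
  rw [psiFCoeff, norm_mul, norm_div, norm_div, RCLike.norm_natCast, mul_comm (C / _)]
  gcongr
  exact hC m

lemma psiFCoeff_succ_mul {a b c : ℂ} (hb : b ≠ 0) (hc : c ≠ 0) (m : ℕ) :
    psiFCoeff α β p a b c (m + 1) * (m + 1) =
      a * b / c * psiFCoeff α β p (a + 1) (b + 1) (c + 1) m := by
  rw [psiFCoeff, psiFCoeff, poch_succ_left, Nat.factorial_succ,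
    show c + 1 - (b + 1) = c - b by ring, eulerBeta_add_one_left hb hc,
    show b + 1 + (m : ℂ) = b + (m + 1 : ℕ) by push_cast; ring]
  rcases eq_or_ne (eulerBeta b (c - b)) 0 with hB | hB
  · simp [hB]
  · push_cast
    field_simp

lemma psiF_hasDerivAt {a b c z : ℂ} (hb : b ≠ 0) (hc : c ≠ 0) (hz : ‖z‖ < 1) :
    HasDerivAt (fun w => psiF α β p a b c w)
      (a * b / c * psiF α β p (a + 1) (b + 1) (c + 1) z) z := by
  obtain ⟨C, hC⟩ := exists_forall_norm_psiFCoeff_le α β p a b c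
  simp only [psiF_eq_tsum_psiFCoeff, ← tsum_mul_left, ← mul_assoc,
    ← psiFCoeff_succ_mul α β p hb hc]
  exact hasDerivAt_tsum_mul_pow hC hz

end PsiF

theorem psiF_iteratedDeriv_general (α β : ℂ) (p : ℝ) (a b c : ℂ) (n : ℕ)
    (hb : 0 < b.re) (hcb : b.re < c.re) :
    ∀ z : ℂ, ‖z‖ < 1 →
      iteratedDeriv n (fun w => psiF α β p a b c w) z =
        poch a n * poch b n / poch c n * psiF α β p (a + n) (b + n) (c + n) z := by
  induction n generalizing a b c with
  | zero => simp [poch]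
  | succ n ih =>
    intro z hz
    have hb0 : b ≠ 0 := fun h => by simp [h] at hb
    have hc0 : c ≠ 0 := fun h => by simp [h] at hcb; linarith
    have hderiv : EqOn (deriv fun w => psiF α β p a b c w)
        (fun w => a * b / c * psiF α β p (a + 1) (b + 1) (c + 1) w) (ball 0 1) :=
      fun w hw => (psiF_hasDerivAt α β p hb0 hc0 (mem_ball_zero_iff.1 hw)).deriv
    rw [iteratedDeriv_succ',
      hderiv.iteratedDeriv_of_isOpen isOpen_ball n (mem_ball_zero_iff.2 hz),
      iteratedDeriv_const_mul_field,
      ih (a + 1) (b + 1) (c + 1) (by simp; linarith) (by simpa using hcb) z hz]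
    simp only [poch_succ_left, Nat.cast_succ, add_assoc, add_comm (1 : ℂ)]
    ring

theorem psiF_iteratedDeriv (α β : ℂ) (p : ℝ) (a b c : ℂ) (n : ℕ)
    (hα : 0 < α.re) (hβ : 1 < β.re) (hp : 0 < p)
    (hb : 0 < b.re) (hcb : b.re < c.re) :
    ∀ z : ℂ, ‖z‖ < 1 →
      iteratedDeriv n (fun w => psiF α β p a b c w) z =
        poch a n * poch b n / poch c n * psiF α β p (a + n) (b + n) (c + n) z :=
  psiF_iteratedDeriv_general α β p a b c n hb hcb
end

section
/- Let α, β be complex numbers with Re(α) > 0 and Re(β) > 1, let p > 0 be real, let b, c be complex with Re(c) > Re(b) > 0, and let n be a natural number. Then the n-th derivative of the Ψ-confluent hypergeometric function in z satisfies d^n/dz^n [ᴪΦ_p^{(α,β)}(b;c;z)] = ((b)_n / (c)_n) · ᴪΦ_p^{(α,β)}(b+n; c+n; z), where (λ)_n is the Pochhammer symbol. -/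
/-!
`ᴪΦ_p^{(α,β)}(b;c;·)` is the exponential generating function `∑ aₖ zᵏ/k!` of the coefficients
`aₖ = ᴪB_p(b+k, c−b)/B(b, c−b)`, which are bounded because `tᵏ ≤ 1` on `[0,1]`. Such a series
is entire and differentiates termwise by shifting its coefficients, so the `n`-th derivative has
coefficients `a_{k+n}`. Finally `B(b+n, c−b) = (b)ₙ/(c)ₙ · B(b, c−b)` by `Γ(x+n) = (x)ₙ Γ(x)`,
which turns the shifted series into `(b)ₙ/(c)ₙ · ᴪΦ_p^{(α,β)}(b+n;c+n;·)`.
-/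

open MeasureTheory Real Set

noncomputable def expGenFun {𝕜 : Type*} [RCLike 𝕜] (a : ℕ → 𝕜) (z : 𝕜) : 𝕜 :=
  ∑' k : ℕ, a k * z ^ k / (k.factorial : 𝕜)

section ExpGenFun

variable {𝕜 : Type*} [RCLike 𝕜] {a : ℕ → 𝕜} {C : ℝ}

lemma norm_mul_pow_div_factorial_le (hC : ∀ k, ‖a k‖ ≤ C) {R : ℝ} {z : 𝕜} (hz : ‖z‖ ≤ R)
    (k : ℕ) : ‖a k * z ^ k / (k.factorial : 𝕜)‖ ≤ C * (R ^ k / k.factorial) := by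
  rw [norm_div, norm_mul, norm_pow, RCLike.norm_natCast, mul_div_assoc]
  gcongr
  exacts [(norm_nonneg _).trans (hC 0), hC k]

lemma summable_mul_pow_div_factorial (hC : ∀ k, ‖a k‖ ≤ C) (z : 𝕜) :
    Summable fun k => a k * z ^ k / (k.factorial : 𝕜) :=
  .of_norm_bounded ((Real.summable_pow_div_factorial ‖z‖).mul_left C)
    (norm_mul_pow_div_factorial_le hC le_rfl)

lemma hasDerivAt_expGenFun (hC : ∀ k, ‖a k‖ ≤ C) (z : 𝕜) :
    HasDerivAt (expGenFun a) (expGenFun (fun k => a (k + 1)) z) z := by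
  have hshift : expGenFun a =
      fun w => a 0 + ∑' k : ℕ, a (k + 1) * w ^ (k + 1) / ((k + 1).factorial : 𝕜) := by
    ext w
    rw [expGenFun, (summable_mul_pow_div_factorial hC w).tsum_eq_zero_add]
    simp
  have hterm (k : ℕ) (w : 𝕜) :
      HasDerivAt (fun w => a (k + 1) * w ^ (k + 1) / ((k + 1).factorial : 𝕜))
        (a (k + 1) * w ^ k / (k.factorial : 𝕜)) w := by
    refine (((hasDerivAt_pow (k + 1) w).const_mul (a (k + 1))).div_const
      ((k + 1).factorial : 𝕜)).congr_deriv ?_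
    rw [Nat.factorial_succ]
    push_cast
    field_simp
  set R := ‖z‖ + 1
  have hbound (k : ℕ) (w : 𝕜) (hw : w ∈ Metric.ball 0 R) :
      ‖a (k + 1) * w ^ k / (k.factorial : 𝕜)‖ ≤ C * (R ^ k / k.factorial) :=
    norm_mul_pow_div_factorial_le (fun k => hC (k + 1)) (mem_ball_zero_iff.1 hw).le k
  rw [hshift]
  refine (hasDerivAt_tsum_of_isPreconnected ((Real.summable_pow_div_factorial R).mul_left C)
    Metric.isOpen_ball (convex_ball 0 R).isPreconnected (fun k w _ => hterm k w) hbound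
    (Metric.mem_ball_self (by positivity)) ?_ (by simp [R])).const_add (a 0)
  simp

lemma iteratedDeriv_expGenFun (n : ℕ) (hC : ∀ k, ‖a k‖ ≤ C) :
    iteratedDeriv n (expGenFun a) = expGenFun (fun k => a (k + n)) := by
  induction n generalizing a with
  | zero => simp
  | succ n ih =>
    have hderiv : deriv (expGenFun a) = expGenFun (fun k => a (k + 1)) :=
      funext fun z => (hasDerivAt_expGenFun hC z).deriv
    rw [iteratedDeriv_succ', hderiv, ih fun k => hC (k + 1)]
    simp only [add_assoc]

end ExpGenFun

/-- The first `k` for which the integrand is integrable dominates all later ones, as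
`t ^ k` decreases on `(0, 1]`; the earlier integrals are the junk value `0`. -/
lemma exists_norm_integral_cpow_add_nat_mul_le (x : ℂ) (g : ℝ → ℂ) :
    ∃ C : ℝ, ∀ k : ℕ, ‖∫ t in (0:ℝ)..1, (t : ℂ) ^ (x + k - 1) * g t‖ ≤ C := by
  set F : ℕ → ℝ → ℂ := fun k t => (t : ℂ) ^ (x + k - 1) * g t
  by_cases! hI : ∃ k, IntervalIntegrable (F k) volume 0 1
  · classical
    set k₀ := Nat.find hI
    have hk₀ : IntegrableOn (F k₀) (Ioc 0 1) :=
      (intervalIntegrable_iff_integrableOn_Ioc_of_le zero_le_one).1 (Nat.find_spec hI)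
    refine ⟨∫ t in Ioc 0 1, ‖F k₀ t‖, fun k => ?_⟩
    have hM : 0 ≤ ∫ t in Ioc 0 1, ‖F k₀ t‖ := integral_nonneg fun t => norm_nonneg _
    rcases lt_or_ge k k₀ with hk | hk
    · rwa [intervalIntegral.integral_undef (Nat.find_min hI hk), norm_zero]
    have hdom : ∀ t ∈ Ioc (0:ℝ) 1, ‖F k t‖ ≤ ‖F k₀ t‖ := by
      rintro t ⟨ht0, ht1⟩
      simp only [F, norm_mul, Complex.norm_cpow_eq_rpow_re_of_pos ht0]
      refine mul_le_mul_of_nonneg_right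
        (Real.rpow_le_rpow_of_exponent_ge ht0 ht1 ?_) (norm_nonneg _)
      simp only [Complex.sub_re, Complex.add_re, Complex.natCast_re, Complex.one_re]
      gcongr
    calc ‖∫ t in (0:ℝ)..1, F k t‖ ≤ ∫ t in Ioc 0 1, ‖F k t‖ := by
          rw [intervalIntegral.integral_of_le zero_le_one]
          exact norm_integral_le_integral_norm _
      _ ≤ ∫ t in Ioc 0 1, ‖F k₀ t‖ :=
          integral_mono_of_nonneg (.of_forall fun t => norm_nonneg _) hk₀.norm
            (ae_restrict_of_forall_mem measurableSet_Ioc hdom)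
  · exact ⟨0, fun k => by rw [intervalIntegral.integral_undef (hI k), norm_zero]⟩

lemma exists_norm_psiBeta_add_nat_le (α β : ℂ) (p : ℝ) (x y : ℂ) :
    ∃ C : ℝ, ∀ k : ℕ, ‖psiBeta α β p (x + k) y‖ ≤ C := by
  simpa only [psiBeta, mul_assoc] using exists_norm_integral_cpow_add_nat_mul_le x
    fun t => ((1 : ℂ) - t) ^ (y - 1) * wright α β (-(p : ℂ) / (t * (1 - t)))

lemma Complex.ne_neg_natCast_of_re_pos {x : ℂ} (hx : 0 < x.re) (m : ℕ) : x ≠ -m := by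
  rintro rfl
  simp only [Complex.neg_re, Complex.natCast_re, Left.neg_pos_iff] at hx
  exact hx.not_ge m.cast_nonneg

lemma poch_ne_zero {x : ℂ} (hx : ∀ m : ℕ, x ≠ -m) (n : ℕ) : poch x n ≠ 0 := by
  rw [poch, ne_eq, ascPochhammer_eval_eq_zero_iff]
  rintro ⟨k, -, hk⟩
  exact hx k (by rw [hk, neg_neg])

lemma eulerBeta_add_nat {x y : ℂ} (hx : ∀ m : ℕ, x ≠ -m) (hxy : ∀ m : ℕ, x + y ≠ -m) (n : ℕ) :
    eulerBeta (x + n) y = poch x n / poch (x + y) n * eulerBeta x y := by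
  have hΓx := Complex.Gamma_ne_zero hx
  have hΓxy := Complex.Gamma_ne_zero hxy
  rw [eulerBeta, eulerBeta, poch, poch, ← Complex.Gamma_add_nat_div_Gamma_eq _ hx,
    ← Complex.Gamma_add_nat_div_Gamma_eq _ hxy, add_right_comm]
  field_simp

theorem psiPhi_iteratedDeriv_general (α β : ℂ) (p : ℝ) (b c : ℂ) (n : ℕ)
    (hb : 0 < b.re) (hcb : b.re < c.re) :
    ∀ z : ℂ, iteratedDeriv n (fun w => psiPhi α β p b c w) z =
      poch b n / poch c n * psiPhi α β p (b + n) (c + n) z := by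
  intro z
  have hb' := Complex.ne_neg_natCast_of_re_pos hb
  have hc' := Complex.ne_neg_natCast_of_re_pos (hb.trans hcb)
  obtain ⟨C, hC⟩ := exists_norm_psiBeta_add_nat_le α β p b (c - b)
  have hcoeff (k : ℕ) : ‖psiBeta α β p (b + k) (c - b) / eulerBeta b (c - b)‖
      ≤ C / ‖eulerBeta b (c - b)‖ := by
    rw [norm_div]; gcongr; exact hC k
  change iteratedDeriv n (expGenFun _) z = _
  rw [iteratedDeriv_expGenFun n hcoeff, expGenFun, psiPhi, ← tsum_mul_left]
  refine tsum_congr fun k => ?_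
  have hB := eulerBeta_add_nat hb' (y := c - b) (by rwa [add_sub_cancel]) n
  rw [add_sub_cancel] at hB
  rw [add_sub_add_right_eq_sub, hB, Nat.cast_add, add_comm (k : ℂ), ← add_assoc]
  field_simp [poch_ne_zero hb' n, poch_ne_zero hc' n]

theorem psiPhi_iteratedDeriv (α β : ℂ) (p : ℝ) (b c : ℂ) (n : ℕ)
    (hα : 0 < α.re) (hβ : 1 < β.re) (hp : 0 < p)
    (hb : 0 < b.re) (hcb : b.re < c.re) :
    ∀ z : ℂ, iteratedDeriv n (fun w => psiPhi α β p b c w) z =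
      poch b n / poch c n * psiPhi α β p (b + n) (c + n) z :=
  psiPhi_iteratedDeriv_general α β p b c n hb hcb
end
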